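/- arXiv:1905.00259 — 2 statements merged into one kernel-verified Lean document; each statement's English description precedes it below -/
import Mathlib

section
/- The Robin correction term H_corr(t,x,y,x',y') = −(κ·e^{κ(y+y')}·e^{κ²t}/√(4πt))·exp(−(x−x')²/(4t))·erfc((y+y')/√(4t) + κ√t) satisfies the heat equation ∂_t H_corr − ∂²_{xx} H_corr − ∂²_{yy} H_corr = 0 for t > 0, y, y' ≥ 0, where κ > 0 is a constant and erfc(z) = (2/√π)·∫_z^∞ e^{−s²} ds. -/
/-!
Write `G t ξ = exp (-ξ²/(4t)) / √(4πt)` for the one-dimensional heat kernel and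
`F t η = κ exp (κη + κ²t) erfc (η/√(4t) + κ√t)`, so that `H = -G(t, x - x') F(t, y + y')`.
A product of solutions of the one-dimensional heat equation in separate variables solves the
two-dimensional one, so it suffices that `F` solves `F_t = F_ηη`. Completing the square turns the
Gaussian produced by differentiating `erfc` into `G`, which gives `F_η = κF - 2κG` and
`F_t = κ²F - κ(2κ - η/t)G`; differentiating `F_η` once more with `G_η = -(η/2t)G` yields `F_t`.
-/

open Real

/-- The complementary error function `erfc(z) = (2/√π)·∫_z^∞ e^{−s²} ds`. -/
noncomputable def erfc (z : ℝ) : ℝ :=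
  (2 / Real.sqrt π) * ∫ s in Set.Ioi z, Real.exp (-s ^ 2)

open MeasureTheory Set

theorem hasDerivAt_integral_Ioi {E : Type*} [NormedAddCommGroup E] [NormedSpace ℝ E]
    [CompleteSpace E] {f : ℝ → E} (hf : Integrable f) (hc : Continuous f) (z : ℝ) :
    HasDerivAt (fun w => ∫ s in Ioi w, f s) (-f z) z := by
  have h : (fun w => ∫ s in Ioi w, f s) = fun w => (∫ s in Ioi 0, f s) - ∫ s in 0..w, f s := by
    funext w
    rw [← intervalIntegral.integral_interval_add_Ioi (a := 0) (b := w) hf.integrableOn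
      hf.integrableOn, add_sub_cancel_left]
  rw [h]
  exact (hc.integral_hasStrictDerivAt 0 z).hasDerivAt.const_sub _

theorem hasDerivAt_erfc (z : ℝ) : HasDerivAt erfc (-(2 / √π) * exp (-z ^ 2)) z := by
  have hf : Integrable fun s : ℝ => exp (-s ^ 2) := by
    simpa using integrable_exp_neg_mul_sq one_pos
  have := (hasDerivAt_integral_Ioi hf (by fun_prop) z).const_mul (2 / √π)
  rwa [mul_neg, ← neg_mul] at this

theorem HasDerivAt.erfc {f : ℝ → ℝ} {f' x : ℝ} (hf : HasDerivAt f f' x) :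
    HasDerivAt (fun y => erfc (f y)) (-(2 / √π) * Real.exp (-f x ^ 2) * f') x :=
  (hasDerivAt_erfc (f x)).comp x hf

theorem Real.sqrt_four_mul (s : ℝ) : √(4 * s) = 2 * √s := by
  rw [sqrt_mul (by norm_num), show (4 : ℝ) = 2 ^ 2 by norm_num, sqrt_sq zero_le_two]

theorem Real.sqrt_four_mul_pi_mul (t : ℝ) : √(4 * π * t) = 2 * (√π * √t) := by
  rw [mul_assoc, sqrt_four_mul, sqrt_mul pi_nonneg]

def SolvesHeatEq (f : ℝ → ℝ → ℝ) (t x : ℝ) : Prop :=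
  HasDerivAt (fun s => f s x) (deriv (deriv (f t)) x) t

namespace SolvesHeatEq

variable {f g : ℝ → ℝ → ℝ} {t x y a : ℝ}

theorem neg (h : SolvesHeatEq f t x) : SolvesHeatEq (fun s u => -f s u) t x := by
  unfold SolvesHeatEq
  simpa only [deriv.fun_neg'] using HasDerivAt.fun_neg h

theorem comp_add_const (h : SolvesHeatEq f t (x + a)) :
    SolvesHeatEq (fun s u => f s (u + a)) t x := by
  unfold SolvesHeatEq
  have hd : deriv (fun u => f t (u + a)) = fun u => deriv (f t) (u + a) :=
    funext fun _ => deriv_comp_add_const _ _ _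
  rw [hd, deriv_comp_add_const]
  exact h

theorem comp_sub_const (h : SolvesHeatEq f t (x - a)) :
    SolvesHeatEq (fun s u => f s (u - a)) t x := by
  simp_rw [sub_eq_add_neg] at h ⊢
  exact h.comp_add_const

theorem heat_eq_mul (hf : SolvesHeatEq f t x) (hg : SolvesHeatEq g t y) :
    deriv (fun s => f s x * g s y) t - deriv (deriv fun u => f t u * g t y) x -
      deriv (deriv fun v => f t x * g t v) y = 0 := by
  rw [(HasDerivAt.fun_mul hf hg).deriv, deriv_mul_const_field', deriv_mul_const_field,
    deriv_const_mul_field', deriv_const_mul_field]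
  ring

end SolvesHeatEq

noncomputable def heatKernel (t ξ : ℝ) : ℝ := exp (-(ξ ^ 2 / (4 * t))) / √(4 * π * t)

theorem hasDerivAt_heatKernel_space (t ξ : ℝ) :
    HasDerivAt (heatKernel t) (-(ξ / (2 * t)) * heatKernel t ξ) ξ := by
  have := ((((hasDerivAt_id' ξ).fun_pow 2).div_const (4 * t)).fun_neg.exp).div_const √(4 * π * t)
  refine this.congr_deriv ?_
  simp only [heatKernel]
  field_simp
  ring

theorem hasDerivAt_heatKernel_time {t : ℝ} (ht : 0 < t) (ξ : ℝ) :
    HasDerivAt (fun s => heatKernel s ξ)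
      ((ξ ^ 2 / (4 * t ^ 2) - 1 / (2 * t)) * heatKernel t ξ) t := by
  have hexp := ((hasDerivAt_const t (ξ ^ 2)).fun_div ((hasDerivAt_id' t).const_mul 4)
    (by positivity)).fun_neg.exp
  have hsqrt := ((hasDerivAt_id' t).const_mul (4 * π)).sqrt (by positivity)
  refine (hexp.fun_div hsqrt (by positivity)).congr_deriv ?_
  simp only [heatKernel]
  field_simp
  rw [sq_sqrt (by positivity)]
  ring

theorem heatKernel_solvesHeatEq {t : ℝ} (ht : 0 < t) (ξ : ℝ) : SolvesHeatEq heatKernel t ξ := by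
  have hd : deriv (heatKernel t) = fun ξ => -(ξ / (2 * t)) * heatKernel t ξ :=
    funext fun ξ => (hasDerivAt_heatKernel_space t ξ).deriv
  have h2 := (((hasDerivAt_id' ξ).div_const (2 * t)).fun_neg.fun_mul
    (hasDerivAt_heatKernel_space t ξ)).deriv
  unfold SolvesHeatEq
  rw [hd, h2]
  refine (hasDerivAt_heatKernel_time ht ξ).congr_deriv ?_
  field_simp
  ring

noncomputable def robinProfile (κ t η : ℝ) : ℝ :=
  κ * exp (κ * η) * exp (κ ^ 2 * t) * erfc (η / √(4 * t) + κ * √t)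

-- Completing the square: `(η/√(4t) + κ√t)² = η²/(4t) + κη + κ²t`.
theorem exp_mul_exp_mul_exp_neg_sq {t : ℝ} (ht : 0 < t) (κ η : ℝ) :
    exp (κ * η) * exp (κ ^ 2 * t) * exp (-(η / √(4 * t) + κ * √t) ^ 2) =
      exp (-(η ^ 2 / (4 * t))) := by
  rw [← exp_add, ← exp_add]
  congr 1
  rw [sqrt_four_mul]
  field_simp
  rw [sq_sqrt ht.le]
  ring

theorem hasDerivAt_robinProfile_space (κ : ℝ) {t : ℝ} (ht : 0 < t) (η : ℝ) :
    HasDerivAt (robinProfile κ t) (κ * robinProfile κ t η - 2 * κ * heatKernel t η) η := by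
  have hz : HasDerivAt (fun v => v / √(4 * t) + κ * √t) (1 / √(4 * t)) η :=
    ((hasDerivAt_id' η).div_const _).add_const _
  have := ((((hasDerivAt_id' η).const_mul κ).exp.const_mul κ).mul_const (exp (κ ^ 2 * t))).fun_mul
    hz.erfc
  refine this.congr_deriv ?_
  rw [robinProfile, heatKernel, ← exp_mul_exp_mul_exp_neg_sq ht κ η, sqrt_four_mul_pi_mul,
    sqrt_four_mul]
  field_simp
  ring

theorem hasDerivAt_robinProfile_time (κ : ℝ) {t : ℝ} (ht : 0 < t) (η : ℝ) :
    HasDerivAt (fun s => robinProfile κ s η)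
      (κ ^ 2 * robinProfile κ t η - κ * (2 * κ - η / t) * heatKernel t η) t := by
  have hz := ((hasDerivAt_const t η).fun_div (((hasDerivAt_id' t).const_mul 4).sqrt
    (by positivity)) (by positivity)).fun_add ((hasDerivAt_sqrt ht.ne').const_mul κ)
  have := ((((hasDerivAt_id' t).const_mul (κ ^ 2)).exp.const_mul (κ * exp (κ * η))).fun_mul
    hz.erfc)
  refine this.congr_deriv ?_
  rw [robinProfile, heatKernel, ← exp_mul_exp_mul_exp_neg_sq ht κ η, sqrt_four_mul_pi_mul,
    sqrt_four_mul]
  obtain ⟨r, hr, rfl⟩ : ∃ r > 0, t = r ^ 2 := ⟨√t, sqrt_pos.2 ht, (sq_sqrt ht.le).symm⟩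
  rw [sqrt_sq hr.le]
  field_simp
  ring

theorem robinProfile_solvesHeatEq (κ : ℝ) {t : ℝ} (ht : 0 < t) (η : ℝ) :
    SolvesHeatEq (robinProfile κ) t η := by
  have hd : deriv (robinProfile κ t) = fun η => κ * robinProfile κ t η - 2 * κ * heatKernel t η :=
    funext fun η => (hasDerivAt_robinProfile_space κ ht η).deriv
  have h2 := (((hasDerivAt_robinProfile_space κ ht η).const_mul κ).fun_sub
    ((hasDerivAt_heatKernel_space t η).const_mul (2 * κ))).deriv
  unfold SolvesHeatEq
  rw [hd, h2]
  refine (hasDerivAt_robinProfile_time κ ht η).congr_deriv ?_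
  field_simp
  ring

theorem robin_correction_heat_equation_general (κ : ℝ) :
    let H : ℝ → ℝ → ℝ → ℝ → ℝ → ℝ := fun t x y x' y' =>
      -(κ * Real.exp (κ * (y + y')) * Real.exp (κ ^ 2 * t) / Real.sqrt (4 * π * t)) *
        Real.exp (-((x - x') ^ 2 / (4 * t))) *
        erfc ((y + y') / Real.sqrt (4 * t) + κ * Real.sqrt t)
    ∀ t : ℝ, 0 < t → ∀ x x' : ℝ, ∀ y y' : ℝ, 0 ≤ y → 0 ≤ y' →
      deriv (fun s => H s x y x' y') t -
        deriv (deriv (fun u => H t u y x' y')) x -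
        deriv (deriv (fun v => H t x v x' y')) y = 0 := by
  intro H t ht x x' y y' _ _
  have hH : H = fun s u v x' y' => -heatKernel s (u - x') * robinProfile κ s (v + y') := by
    funext s u v x' y'
    simp only [H, heatKernel, robinProfile]
    ring
  rw [hH]
  exact ((heatKernel_solvesHeatEq ht (x - x')).comp_sub_const.neg).heat_eq_mul
    (robinProfile_solvesHeatEq κ ht (y + y')).comp_add_const

/-- The Robin correction term for the half-plane heat kernel satisfies the heat
equation `∂_t H − ∂²_{xx} H − ∂²_{yy} H = 0` for `t > 0` and `y, y' ≥ 0`,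
where `κ > 0` is a constant Robin parameter. -/
theorem robin_correction_heat_equation (κ : ℝ) (hκ : 0 < κ) :
    let H : ℝ → ℝ → ℝ → ℝ → ℝ → ℝ := fun t x y x' y' =>
      -(κ * Real.exp (κ * (y + y')) * Real.exp (κ ^ 2 * t) / Real.sqrt (4 * π * t)) *
        Real.exp (-((x - x') ^ 2 / (4 * t))) *
        erfc ((y + y') / Real.sqrt (4 * t) + κ * Real.sqrt t)
    ∀ t : ℝ, 0 < t → ∀ x x' : ℝ, ∀ y y' : ℝ, 0 ≤ y → 0 ≤ y' →
      deriv (fun s => H s x y x' y') t -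
        deriv (deriv (fun u => H t u y x' y')) x -
        deriv (deriv (fun v => H t x v x' y')) y = 0 :=
  robin_correction_heat_equation_general κ
end

section
/- The model function ℋ(X, ξ, ξ') = (4π)⁻¹·exp(−X²/4)·(exp(−(ξ−ξ')²/4) + exp(−(ξ+ξ')²/4)) satisfies the model equation (−∂²_{XX} − (X/2)∂_X − ∂²_{ξξ} − (ξ/2)∂_ξ − (ξ'/2)∂_{ξ'} − 1)ℋ = 0 on the set {ξ = ξ'}. The same holds with the plus sign between the two exponentials replaced by a minus sign. -/
/-!
With `g x = exp (-x ^ 2 / 4)` one has `g'' + (x / 2) g' + g / 2 = 0`: `g` is an eigenfunction of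
`-∂² - (x / 2) ∂` with eigenvalue `1 / 2`. Both terms of `ℋ` are `g X · g (ξ ∓ ξ')`, so the
`X`-part of the operator returns `ℋ / 2`. On `ξ = ξ'` the `ξ`, `ξ'`-part applied to `g (ξ - ξ')`
and `g (ξ + ξ')` collapses to the same one-variable operator applied to `g` at the points `0` and
`2ξ`, returning another `ℋ / 2`, which the `-1` cancels.
-/

open Real

noncomputable def heatGaussian (x : ℝ) : ℝ := exp (-x ^ 2 / 4)

theorem heatGaussian_def (x : ℝ) : heatGaussian x = exp (-x ^ 2 / 4) := rfl

theorem hasDerivAt_heatGaussian (x : ℝ) :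
    HasDerivAt heatGaussian (-(x / 2) * heatGaussian x) x := by
  have h : HasDerivAt (fun y : ℝ => -y ^ 2 / 4) (-(x / 2)) x :=
    ((hasDerivAt_pow 2 x).neg.div_const 4).congr_deriv (by norm_num; ring)
  exact h.exp.congr_deriv (mul_comm _ _)

theorem deriv_heatGaussian : deriv heatGaussian = fun x => -(x / 2) * heatGaussian x :=
  funext fun x => (hasDerivAt_heatGaussian x).deriv

@[fun_prop]
theorem differentiable_heatGaussian : Differentiable ℝ heatGaussian :=
  fun x => (hasDerivAt_heatGaussian x).differentiableAt

theorem differentiable_deriv_heatGaussian : Differentiable ℝ (deriv heatGaussian) := by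
  rw [deriv_heatGaussian]
  fun_prop

theorem deriv_deriv_heatGaussian (x : ℝ) :
    deriv (deriv heatGaussian) x = -(x / 2) * deriv heatGaussian x - heatGaussian x / 2 := by
  have h : HasDerivAt (fun y => -(y / 2) * heatGaussian y)
      (-(1 / 2) * heatGaussian x + -(x / 2) * (-(x / 2) * heatGaussian x)) x :=
    ((hasDerivAt_id' x).div_const 2).neg.mul (hasDerivAt_heatGaussian x)
  rw [deriv_heatGaussian, h.deriv]
  ring

theorem deriv_comp_sub_const_add_mul_comp_add_const {𝕜 : Type*} [NontriviallyNormedField 𝕜]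
    {f : 𝕜 → 𝕜} (hf : Differentiable 𝕜 f) (a b : 𝕜) :
    deriv (fun x => f (x - a) + b * f (x + a)) =
      fun x => deriv f (x - a) + b * deriv f (x + a) := by
  funext x
  simp (disch := fun_prop) only [deriv_fun_add, deriv_const_mul_field', deriv_comp_sub_const,
    deriv_comp_add_const]

theorem side_face_model_equation_general (ε : ℝ) :
    let F : ℝ → ℝ → ℝ → ℝ := fun X ξ ξ' =>
      (4 * π)⁻¹ * Real.exp (-X ^ 2 / 4) *
        (Real.exp (-(ξ - ξ') ^ 2 / 4) + ε * Real.exp (-(ξ + ξ') ^ 2 / 4))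
    ∀ X ξ : ℝ,
      -(deriv (deriv (fun u => F u ξ ξ)) X) - X / 2 * deriv (fun u => F u ξ ξ) X -
        deriv (deriv (fun v => F X v ξ)) ξ - ξ / 2 * deriv (fun v => F X v ξ) ξ -
        ξ / 2 * deriv (fun w => F X ξ w) ξ - F X ξ ξ = 0 := by
  intro F X ξ
  simp only [F, ← heatGaussian_def]
  simp only [deriv_mul_const_field', deriv_const_mul_field',
    deriv_comp_sub_const_add_mul_comp_add_const differentiable_heatGaussian,
    deriv_comp_sub_const_add_mul_comp_add_const differentiable_deriv_heatGaussian]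
  simp (disch := fun_prop) only [deriv_fun_add, deriv_const_mul_field', deriv_comp_const_sub,
    deriv_comp_const_add]
  simp only [deriv_deriv_heatGaussian]
  ring

/-- The Neumann (`ε = 1`) and Dirichlet (`ε = −1`) leading-order models at the
side face satisfy the model equation
`(−∂²_{XX} − (X/2)∂_X − ∂²_{ξξ} − (ξ/2)∂_ξ − (ξ'/2)∂_{ξ'} − 1)ℋ = 0`
on the set `{ξ = ξ'}`. -/
theorem side_face_model_equation (ε : ℝ) (hε : ε = 1 ∨ ε = -1) :
    let F : ℝ → ℝ → ℝ → ℝ := fun X ξ ξ' =>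
      (4 * π)⁻¹ * Real.exp (-X ^ 2 / 4) *
        (Real.exp (-(ξ - ξ') ^ 2 / 4) + ε * Real.exp (-(ξ + ξ') ^ 2 / 4))
    ∀ X ξ : ℝ,
      -(deriv (deriv (fun u => F u ξ ξ)) X) - X / 2 * deriv (fun u => F u ξ ξ) X -
        deriv (deriv (fun v => F X v ξ)) ξ - ξ / 2 * deriv (fun v => F X v ξ) ξ -
        ξ / 2 * deriv (fun w => F X ξ w) ξ - F X ξ ξ = 0 :=
  side_face_model_equation_general ε
end
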